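/- arXiv:2403.08958 — 2 statements merged into one kernel-verified Lean document; each statement's English description precedes it below -/
import Mathlib

section
/- With the setting of the previous statement (V = ker[A B] the steady-state space, 𝒫 = P_V diag(C*C, K*K)|_V with K coercive), the kernel of 𝒫 is trivial, i.e., ker 𝒫 = {(0,0)}, if and only if ker A ∩ ker C = {0}. -/
local notation "⟪" x ", " y "⟫" => @inner ℂ _ _ x y

/-- With `V = ker [A B]` and `𝒫 = P_V diag(C*C, K*K)|_V` (with `K` coercive),
the kernel of `𝒫` is trivial iff `ker A ∩ ker C = {0}`. -/
theorem stmt9 {H U Y : Type*}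
    [NormedAddCommGroup H] [InnerProductSpace ℂ H] [CompleteSpace H]
    [NormedAddCommGroup U] [InnerProductSpace ℂ U] [CompleteSpace U]
    [NormedAddCommGroup Y] [InnerProductSpace ℂ Y] [CompleteSpace Y]
    (D : Submodule ℂ H) (A : D →ₗ[ℂ] H)
    (hdense : Dense (D : Set H))
    (hclosed : IsClosed {p : H × H | ∃ h : p.1 ∈ D, A ⟨p.1, h⟩ = p.2})
    (B : U →L[ℂ] H) (C : H →L[ℂ] Y) (K : U →L[ℂ] U)
    (m : ℝ) (hm : 0 < m)
    (hcoer : ∀ u : U, m * ‖u‖ ^ 2 ≤ (⟪(K.adjoint.comp K) u, u⟫).re)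
    (V : Submodule ℂ (WithLp 2 (H × U))) [V.HasOrthogonalProjection]
    (hV : ∀ p : WithLp 2 (H × U), p ∈ V ↔
      ∃ h : (WithLp.equiv 2 (H × U) p).1 ∈ D,
        A ⟨(WithLp.equiv 2 (H × U) p).1, h⟩ + B (WithLp.equiv 2 (H × U) p).2 = 0) :
    ((∀ p : WithLp 2 (H × U), p ∈ V →
        V.orthogonalProjectionOnto ((WithLp.equiv 2 (H × U)).symm
          (C.adjoint (C (WithLp.equiv 2 (H × U) p).1),
           K.adjoint (K (WithLp.equiv 2 (H × U) p).2))) = 0 → p = 0)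
      ↔ (∀ (x : H) (hx : x ∈ D), A ⟨x, hx⟩ = 0 → C x = 0 → x = 0)) := by
  set e := WithLp.equiv 2 (H × U) with he
  constructor
  · intro h x hx hAx hCx
    set p : WithLp 2 (H × U) := e.symm (x, 0) with hp
    have h1 : (e p).1 = x := by simp [hp]
    have h2 : (e p).2 = 0 := by simp [hp]
    have hpV : p ∈ V := by
      rw [hV]
      refine ⟨h1 ▸ hx, ?_⟩
      show A ⟨x, hx⟩ + B (0 : U) = 0
      simp [hAx]
    have harg : (C.adjoint (C (e p).1), K.adjoint (K (e p).2)) = ((0 : H), (0 : U)) := by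
      rw [h1, h2, hCx]; simp
    have hkey : p = 0 := by
      refine h p hpV ?_
      rw [harg]
      show V.orthogonalProjectionOnto (0 : WithLp 2 (H × U)) = 0
      simp
    have h3 : (e p).1 = (0 : H × U).1 := congrArg Prod.fst (congrArg e hkey)
    rw [h1] at h3
    simpa using h3
  · intro h p hpV hproj
    obtain ⟨hxD, heq⟩ := (hV p).1 hpV
    have h0 : ⟪(e.symm (C.adjoint (C (e p).1), K.adjoint (K (e p).2)) : WithLp 2 (H × U)), p⟫ = 0 := by
      have h1 := Submodule.inner_orthogonalProjectionOnto_eq_of_mem_right (K := V) ⟨p, hpV⟩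
        (e.symm (C.adjoint (C (e p).1), K.adjoint (K (e p).2)))
      rw [hproj] at h1
      simpa using h1.symm
    have hexp : ⟪(e.symm (C.adjoint (C (e p).1), K.adjoint (K (e p).2)) : WithLp 2 (H × U)), p⟫
        = ⟪C (e p).1, C (e p).1⟫ + ⟪(K.adjoint.comp K) (e p).2, (e p).2⟫ := by
      rw [WithLp.prod_inner_apply]
      simp only [he, WithLp.equiv_symm_apply, WithLp.ofLp_toLp,
        ContinuousLinearMap.adjoint_inner_left, ContinuousLinearMap.comp_apply]
      rfl
    rw [h0] at hexp
    have hre : (0:ℝ) = ‖C (e p).1‖^2 + (⟪(K.adjoint.comp K) (e p).2, (e p).2⟫).re := by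
      have := congrArg Complex.re hexp
      simpa [← inner_self_eq_norm_sq (𝕜 := ℂ)] using this
    have hKu : (⟪(K.adjoint.comp K) (e p).2, (e p).2⟫).re ≤ 0 := by
      nlinarith [sq_nonneg ‖C (e p).1‖]
    have hu0 : (e p).2 = 0 := by
      have h1 := hcoer (e p).2
      have h2 : ‖(e p).2‖^2 = 0 := le_antisymm (by nlinarith) (sq_nonneg _)
      have h3 : ‖(e p).2‖ = 0 := (pow_eq_zero_iff two_ne_zero).mp h2
      simpa using h3
    have hCx0 : C (e p).1 = 0 := by
      rw [hu0] at hre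
      simp only [map_zero, inner_zero_right, Complex.zero_re, add_zero] at hre
      have : ‖C (e p).1‖ = 0 := (pow_eq_zero_iff two_ne_zero).mp hre.symm
      simpa using this
    have hAx0 : A ⟨(e p).1, hxD⟩ = 0 := by
      rw [hu0, map_zero, add_zero] at heq
      exact heq
    have hx0 : (e p).1 = 0 := h _ hxD hAx0 hCx0
    exact e.injective (Prod.ext hx0 hu0)
end

section
/- Let T be a strongly continuous semigroup on a Hilbert space H and C ∈ L(H, Y). For a fixed time horizon T₀ > 0 and input u ∈ L²(0, T₀; U), let x_γ(t) = T_t(γ x₀) + Φ_t u be the mild solution of ẋ = Ax + Bu with initial condition γ x₀, where Φ_t u = ∫₀^t T_{t-s} B u(s) ds. If x₀ belongs to the unobservable subspace U∞, then for every γ ∈ ℂ and t ∈ [0, T₀], ‖C x_γ(t)‖² = ‖C Φ_t u‖². Consequently, in the cost J(γ x₀, u) = ∫₀^{T₀} ‖C x_γ(t)‖² + ‖K u(t)‖² + 2Re⟨z, x_γ(t)⟩ + 2Re⟨v, u(t)⟩ dt, all terms depending on u are independent of γ, and hence the optimal control satisfies u*_{T₀}(·, γ x₀) = u*_{T₀}(·,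 x₀) for all γ ∈ ℂ. -/
/-! If `C T_t y = 0` for all `t ≥ 0`, replacing the initial state `x₀` by `x₀ + y` leaves the
output `C x(t)` unchanged and shifts the cost by `∫ 2 Re ⟪z, T_t y⟫`, which does not depend on
the control. With `y = (γ - 1) x₀` the costs for `γ x₀` and `x₀` differ by a constant, so a
minimiser for `x₀` is one for `γ x₀`, and uniqueness identifies it with `u₂`.

The cost integrand is integrable because `t ↦ Φ_t u` is continuous: by Banach–Steinhaus a
strongly continuous family of operators is locally bounded, hence jointly continuous. -/

open MeasureTheory intervalIntegral

local notation "⟪" x ", " y "⟫" => @inner ℂ _ _ x y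

noncomputable section

variable {H U Y : Type*}
  [NormedAddCommGroup H] [InnerProductSpace ℂ H] [CompleteSpace H]
  [NormedAddCommGroup U] [InnerProductSpace ℂ U] [CompleteSpace U]
  [NormedAddCommGroup Y] [InnerProductSpace ℂ Y] [CompleteSpace Y]

/-- The input-to-state map `Φ_t u = ∫₀ᵗ T_{t-s} B u(s) ds`. -/
def inputMap (T : ℝ → H →L[ℂ] H) (B : U →L[ℂ] H) (u : ℝ → U) (t : ℝ) : H :=
  ∫ s in (0:ℝ)..t, T (t - s) (B (u s))

/-- The mild solution `x(t) = T_t x₀ + Φ_t u` of `ẋ = Ax + Bu`, `x(0) = x₀`. -/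
def traj (T : ℝ → H →L[ℂ] H) (B : U →L[ℂ] H) (x₀ : H) (u : ℝ → U) (t : ℝ) : H :=
  T t x₀ + inputMap T B u t

/-- The finite-horizon generalized LQ cost. -/
def costGLQ (T : ℝ → H →L[ℂ] H) (B : U →L[ℂ] H) (C : H →L[ℂ] Y) (K : U →L[ℂ] U)
    (z : H) (v : U) (T₀ : ℝ) (x₀ : H) (u : ℝ → U) : ℝ :=
  ∫ t in (0:ℝ)..T₀,
    (‖C (traj T B x₀ u t)‖ ^ 2 + ‖K (u t)‖ ^ 2
      + 2 * (⟪z, traj T B x₀ u t⟫).re + 2 * (⟪v, u t⟫).re)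

open Set Filter Topology

section
variable {𝕜 E F X : Type*} [NontriviallyNormedField 𝕜]
  [NormedAddCommGroup E] [NormedSpace 𝕜 E] [CompleteSpace E]
  [NormedAddCommGroup F] [NormedSpace 𝕜 F] [TopologicalSpace X]

theorem IsCompact.exists_forall_opNorm_le {T : X → E →L[𝕜] F} {K : Set X} (hK : IsCompact K)
    (hT : ∀ x, ContinuousOn (fun t => T t x) K) : ∃ M, ∀ t ∈ K, ‖T t‖ ≤ M := by
  obtain ⟨M, hM⟩ := banach_steinhaus (g := fun t : K => T t) fun x => by
    obtain ⟨C, hC⟩ := hK.exists_bound_of_continuousOn (hT x)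
    exact ⟨C, fun t => hC t t.2⟩
  exact ⟨M, fun t ht => hM ⟨t, ht⟩⟩

theorem continuous_apply_of_forall_continuous [WeaklyLocallyCompactSpace X]
    {T : X → E →L[𝕜] F} (hT : ∀ x, Continuous fun t => T t x) :
    Continuous fun p : X × E => T p.1 p.2 := by
  refine continuous_iff_continuousAt.2 fun ⟨t₀, x₀⟩ => ?_
  obtain ⟨K, hK, hKt₀⟩ := exists_compact_mem_nhds t₀
  obtain ⟨M, hM⟩ := hK.exists_forall_opNorm_le fun x => (hT x).continuousOn
  have hsmall : Tendsto (fun p : X × E => T p.1 (p.2 - x₀)) (𝓝 (t₀, x₀)) (𝓝 0) := by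
    refine squeeze_zero_norm' ?_ (?_ : Tendsto (fun p : X × E => M * ‖p.2 - x₀‖) _ (𝓝 0))
    · filter_upwards [prod_mem_nhds hKt₀ univ_mem] with p hp
      exact (T p.1).le_of_opNorm_le (hM p.1 hp.1) _
    · exact Continuous.tendsto' (by fun_prop) _ _ (by simp)
  have hfixed : Tendsto (fun p : X × E => T p.1 x₀) (𝓝 (t₀, x₀)) (𝓝 (T t₀ x₀)) :=
    ((hT x₀).comp continuous_fst).tendsto _
  simpa [ContinuousAt] using hsmall.add hfixed

end

def unobservableSubspace (T : ℝ → H →L[ℂ] H) (C : H →L[ℂ] Y) : Submodule ℂ H where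
  carrier := {x | ∀ t : ℝ, 0 ≤ t → C (T t x) = 0}
  add_mem' hx hy t ht := by simp [hx t ht, hy t ht]
  zero_mem' t _ := by simp
  smul_mem' c x hx t ht := by simp [hx t ht]

variable {T : ℝ → H →L[ℂ] H} {B : U →L[ℂ] H} {C : H →L[ℂ] Y}

omit [CompleteSpace H] [CompleteSpace U] [CompleteSpace Y] in
theorem map_traj_of_mem_unobservableSubspace {y : H} (hy : y ∈ unobservableSubspace T C)
    (u : ℝ → U) {t : ℝ} (ht : 0 ≤ t) : C (traj T B y u t) = C (inputMap T B u t) := by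
  rw [traj, map_add, hy t ht, zero_add]

omit [CompleteSpace U] in
theorem continuous_inputMap (hT : ∀ x, Continuous fun t => T t x) {u : ℝ → U}
    (hu : Continuous u) : Continuous (inputMap T B u) :=
  intervalIntegral.continuous_parametric_intervalIntegral_of_continuous
    (f := fun t s => T (t - s) (B (u s)))
    ((continuous_apply_of_forall_continuous hT).comp
      (f := fun p : ℝ × ℝ => (p.1 - p.2, B (u p.2))) (by fun_prop)) continuous_id

omit [CompleteSpace U] in
theorem continuous_traj (hT : ∀ x, Continuous fun t => T t x) (x₀ : H) {u : ℝ → U}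
    (hu : Continuous u) : Continuous (traj T B x₀ u) :=
  (hT x₀).add (continuous_inputMap hT hu)

omit [CompleteSpace Y] in
theorem costGLQ_add_of_mem_unobservableSubspace {K : U →L[ℂ] U} {z : H} {v : U}
    (hT : ∀ x, Continuous fun t => T t x) {T₀ : ℝ} (hT₀ : 0 ≤ T₀) (x₀ : H) {y : H}
    (hy : y ∈ unobservableSubspace T C) {u : ℝ → U} (hu : Continuous u) :
    costGLQ T B C K z v T₀ (x₀ + y) u
      = costGLQ T B C K z v T₀ x₀ u + ∫ t in (0:ℝ)..T₀, 2 * (⟪z, T t y⟫).re := by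
  have htraj := continuous_traj (B := B) hT x₀ hu
  have hcost : IntervalIntegrable (fun t => ‖C (traj T B x₀ u t)‖ ^ 2 + ‖K (u t)‖ ^ 2
      + 2 * (⟪z, traj T B x₀ u t⟫).re + 2 * (⟪v, u t⟫).re) volume 0 T₀ :=
    (by fun_prop : Continuous _).intervalIntegrable _ _
  have hshift : IntervalIntegrable (fun t => 2 * (⟪z, T t y⟫).re) volume 0 T₀ :=
    (by fun_prop : Continuous _).intervalIntegrable _ _
  rw [costGLQ, costGLQ, ← integral_add hcost hshift]
  refine integral_congr fun t ht => ?_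
  rw [uIcc_of_le hT₀] at ht
  have hCy : C (T t y) = 0 := hy t ht.1
  simp only [traj, map_add, hCy, add_zero, inner_add_right, Complex.add_re]
  ring

theorem stmt10_general
    (T : ℝ → H →L[ℂ] H)
    (hTcont : ∀ x : H, Continuous fun t : ℝ => T t x)
    (B : U →L[ℂ] H) (C : H →L[ℂ] Y) (K : U →L[ℂ] U) (z : H) (v : U)
    (T₀ : ℝ) (hT₀ : 0 < T₀)
    (x₀ : H) (hx₀ : ∀ t : ℝ, 0 ≤ t → C (T t x₀) = 0) :
    (∀ (γ : ℂ) (u : ℝ → U) (t : ℝ), 0 ≤ t → t ≤ T₀ →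
      ‖C (traj T B (γ • x₀) u t)‖ ^ 2 = ‖C (inputMap T B u t)‖ ^ 2) ∧
    (∀ (γ : ℂ) (u₁ u₂ : ℝ → U), Continuous u₁ → Continuous u₂ →
      (∀ u : ℝ → U, Continuous u →
        costGLQ T B C K z v T₀ x₀ u₁ ≤ costGLQ T B C K z v T₀ x₀ u) →
      (∀ u : ℝ → U, Continuous u →
        costGLQ T B C K z v T₀ (γ • x₀) u₂ ≤ costGLQ T B C K z v T₀ (γ • x₀) u) →
      (∀ w w' : ℝ → U, Continuous w → Continuous w' →
        (∀ u : ℝ → U, Continuous u →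
          costGLQ T B C K z v T₀ (γ • x₀) w ≤ costGLQ T B C K z v T₀ (γ • x₀) u) →
        (∀ u : ℝ → U, Continuous u →
          costGLQ T B C K z v T₀ (γ • x₀) w' ≤ costGLQ T B C K z v T₀ (γ • x₀) u) →
        w = w') →
      u₁ = u₂) := by
  have hγx₀ (γ : ℂ) : γ • x₀ ∈ unobservableSubspace T C := (unobservableSubspace T C).smul_mem γ hx₀
  refine ⟨fun γ u t ht _ => by rw [map_traj_of_mem_unobservableSubspace (hγx₀ γ) u ht], ?_⟩
  intro γ u₁ u₂ hu₁ hu₂ hopt₁ hopt₂ huniq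
  have hshift {u : ℝ → U} (hu : Continuous u) :
      costGLQ T B C K z v T₀ (γ • x₀) u = costGLQ T B C K z v T₀ x₀ u
        + ∫ t in (0:ℝ)..T₀, 2 * (⟪z, T t ((γ - 1) • x₀)⟫).re := by
    rw [← costGLQ_add_of_mem_unobservableSubspace hTcont hT₀.le x₀ (hγx₀ (γ - 1)) hu, sub_smul,
      one_smul, add_sub_cancel]
  refine huniq u₁ u₂ hu₁ hu₂ (fun u hu => ?_) hopt₂
  rw [hshift hu₁, hshift hu]
  linarith [hopt₁ u hu]

/-- Lemma 4.1: if `x₀` is unobservable, then for any `γ ∈ ℂ` the output along any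
trajectory started at `γ x₀` equals the output of the input map alone; hence the
(unique) optimal controls for initial conditions `γ x₀` and `x₀` coincide. -/
theorem stmt10
    (T : ℝ → H →L[ℂ] H)
    (hT0 : T 0 = ContinuousLinearMap.id ℂ H)
    (hTadd : ∀ s t : ℝ, 0 ≤ s → 0 ≤ t → T (s + t) = (T s).comp (T t))
    (hTcont : ∀ x : H, Continuous fun t : ℝ => T t x)
    (B : U →L[ℂ] H) (C : H →L[ℂ] Y) (K : U →L[ℂ] U) (z : H) (v : U)
    (m : ℝ) (hm : 0 < m)
    (hcoer : ∀ u : U, m * ‖u‖ ^ 2 ≤ (⟪(K.adjoint.comp K) u, u⟫).re)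
    (T₀ : ℝ) (hT₀ : 0 < T₀)
    (x₀ : H) (hx₀ : ∀ t : ℝ, 0 ≤ t → C (T t x₀) = 0) :
    (∀ (γ : ℂ) (u : ℝ → U) (t : ℝ), 0 ≤ t → t ≤ T₀ →
      ‖C (traj T B (γ • x₀) u t)‖ ^ 2 = ‖C (inputMap T B u t)‖ ^ 2) ∧
    (∀ (γ : ℂ) (u₁ u₂ : ℝ → U), Continuous u₁ → Continuous u₂ →
      (∀ u : ℝ → U, Continuous u →
        costGLQ T B C K z v T₀ x₀ u₁ ≤ costGLQ T B C K z v T₀ x₀ u) →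
      (∀ u : ℝ → U, Continuous u →
        costGLQ T B C K z v T₀ (γ • x₀) u₂ ≤ costGLQ T B C K z v T₀ (γ • x₀) u) →
      (∀ w w' : ℝ → U, Continuous w → Continuous w' →
        (∀ u : ℝ → U, Continuous u →
          costGLQ T B C K z v T₀ (γ • x₀) w ≤ costGLQ T B C K z v T₀ (γ • x₀) u) →
        (∀ u : ℝ → U, Continuous u →
          costGLQ T B C K z v T₀ (γ • x₀) w' ≤ costGLQ T B C K z v T₀ (γ • x₀) u) →
        w = w') →
      u₁ = u₂) :=
  stmt10_general T hTcont B C K z v T₀ hT₀ x₀ hx₀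

end
end
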